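/- The Pidduck polynomials P_n(x), defined by \sum_{n\ge 0} P_n(x) z^n/n! = \frac{1}{1-z}\left(\frac{1+z}{1-z}\right)^x, satisfy P_n(x) = n! \sum_{k=0}^n \binom{n}{n-k} 2^k \binom{x}{k}. -/

import Mathlib

open PowerSeries

/-- Composition `f ∘ g` of formal power series (intended for `g` with zero
constant coefficient). -/
noncomputable def psComp (f g : PowerSeries ℂ) : PowerSeries ℂ :=
  PowerSeries.mk fun n => ∑ k ∈ Finset.range (n + 1),
    (PowerSeries.coeff k f) * (PowerSeries.coeff n (g ^ k))

/-- `e^u` for a power series `u` with zero constant coefficient. -/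
noncomputable def psExp (u : PowerSeries ℂ) : PowerSeries ℂ :=
  psComp (PowerSeries.exp ℂ) u

/-- The power series `log(1 + z) = ∑_{n≥1} (-1)^{n+1} zⁿ/n`. -/
noncomputable def logOneAdd : PowerSeries ℂ :=
  PowerSeries.mk fun n => if n = 0 then 0 else (-1) ^ (n + 1) / (n : ℂ)

/-- The power series `log(1 - z) = -∑_{n≥1} zⁿ/n`. -/
noncomputable def logOneSub : PowerSeries ℂ :=
  PowerSeries.mk fun n => if n = 0 then 0 else -(1 / (n : ℂ))

/-- The generalized binomial coefficient `m(m-1)⋯(m-j+1)/j!`. -/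
noncomputable def genBinom (m : ℂ) (j : ℕ) : ℂ :=
  (∏ i ∈ Finset.range j, (m - i)) / (j.factorial : ℂ)

/-! Put `Q = ∑ Pₙ(x) zⁿ/n!` and `T = ∑ cₙ zⁿ` with `cₙ = ∑ₖ C(n,k) 2ᵏ C(x,k)`. Since
`d/dz log((1+z)/(1-z)) = 2/(1-z²)`, the chain rule for `exp` turns
`(1 - z) Q = exp(x log((1+z)/(1-z)))` into the linear ODE `(1 - z²) Q' = (2x + 1 + z) Q`.
On coefficients the same ODE for `T` is the recurrence `(n+1) cₙ₊₁ = (2x+1) cₙ + n cₙ₋₁`,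
which follows from `(k+1) C(x,k+1) = (x-k) C(x,k)` and a three-term Pascal identity.
A linear ODE with invertible leading coefficient has at most one power series solution
with given constant term, and `Q(0) = T(0) = 1`, so `Q = T`. -/

theorem Nat.cast_choose_succ_right_eq {R : Type*} [CommRing R] (n k : ℕ) :
    (n.choose (k + 1) : R) * (k + 1) = ((n : R) - k) * n.choose k := by
  have h := Nat.add_one_mul_choose_eq n k
  rw [Nat.choose_succ_succ] at h
  have h' := congrArg (Nat.cast : ℕ → R) h
  push_cast at h'
  linear_combination -h'

theorem Nat.cast_add_one_mul_choose_eq {R : Type*} [CommRing R] (n k : ℕ) :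
    ((n : R) + 1) * (n + 1).choose k =
      k * n.choose (k - 1) + (2 * k + 1) * n.choose k + n * (n - 1).choose k := by
  rcases k with _ | k
  · simp
    ring
  have hlow : (n : R) * (n - 1).choose (k + 1) = n.choose (k + 1 + 1) * (k + 1 + 1) := by
    rcases n with _ | n
    · simp
    · have h := congrArg (Nat.cast : ℕ → R) (Nat.add_one_mul_choose_eq n (k + 1))
      push_cast [Nat.add_sub_cancel] at h ⊢
      linear_combination h
  have e1 := Nat.cast_choose_succ_right_eq (R := R) n k
  have e2 := Nat.cast_choose_succ_right_eq (R := R) n (k + 1)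
  rw [Nat.choose_succ_succ', Nat.add_sub_cancel]
  push_cast at e2 ⊢
  linear_combination -hlow - e2 - e1

namespace PowerSeries

theorem coeff_pow_eq_zero_of_lt {R : Type*} [CommRing R] {g : R⟦X⟧} (hg : constantCoeff g = 0)
    {n k : ℕ} (h : n < k) : coeff n (g ^ k) = 0 :=
  coeff_of_lt_order n ((Nat.cast_lt.2 h).trans_le (le_order_pow_of_constantCoeff_eq_zero k hg))

theorem one_add_X_mul_mk_neg_one_pow {R : Type*} [CommRing R] :
    (1 + X : R⟦X⟧) * mk (fun n => (-1) ^ n) = 1 := by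
  have h := congrArg (rescale (-1 : R)) (mk_one_mul_one_sub_eq_one R)
  rw [map_mul, rescale_mk, map_sub, rescale_X, map_one] at h
  simp only [Pi.one_apply, mul_one, map_neg, map_one, neg_mul, one_mul, sub_neg_eq_add] at h
  rw [mul_comm, h]

section LinearODE

variable {K : Type*} [Field K] [CharZero K]

theorem eq_of_derivative_eq_mul_self {H F G : K⟦X⟧} (hF : d⁄dX K F = H * F)
    (hG : d⁄dX K G = H * G) (h0 : constantCoeff F = constantCoeff G) : F = G := by
  rw [← sub_eq_zero]
  have hD : d⁄dX K (F - G) = H * (F - G) := by rw [map_sub, hF, hG, mul_sub]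
  ext n
  induction n using Nat.strong_induction_on with
  | _ n ih =>
    rcases n with _ | n
    · simp [h0]
    · have h := congrArg (coeff n) hD
      have hlower (p : ℕ × ℕ) (hp : p ∈ Finset.HasAntidiagonal.antidiagonal n) :
          coeff p.2 (F - G) = 0 := by
        rw [ih p.2 (by have := Finset.HasAntidiagonal.mem_antidiagonal.1 hp; omega), map_zero]
      rw [coeff_derivative, coeff_mul,
        Finset.sum_eq_zero fun p hp => by rw [hlower p hp, mul_zero]] at h
      simpa [Nat.cast_add_one_ne_zero] using h

theorem eq_of_mul_derivative_eq_mul_self {A B F G : K⟦X⟧} (hA : constantCoeff A ≠ 0)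
    (hF : A * d⁄dX K F = B * F) (hG : A * d⁄dX K G = B * G)
    (h0 : constantCoeff F = constantCoeff G) : F = G := by
  have solve (Y : K⟦X⟧) (hY : A * d⁄dX K Y = B * Y) : d⁄dX K Y = A⁻¹ * B * Y := by
    rw [mul_assoc, ← hY, ← mul_assoc, PowerSeries.inv_mul_cancel A hA, one_mul]
  exact eq_of_derivative_eq_mul_self (solve F hF) (solve G hG) h0

end LinearODE

end PowerSeries

open PowerSeries

theorem psComp_eq_subst {f g : ℂ⟦X⟧} (hg : constantCoeff g = 0) : psComp f g = f.subst g := by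
  ext n
  rw [psComp, coeff_mk, coeff_subst' (HasSubst.of_constantCoeff_zero' hg),
    finsum_eq_sum_of_support_subset (s := Finset.range (n + 1))]
  · simp [smul_eq_mul]
  · intro d hd
    simp only [Function.mem_support, Finset.coe_range, Set.mem_Iio] at hd ⊢
    by_contra! h
    exact hd (by rw [coeff_pow_eq_zero_of_lt hg (by omega), smul_zero])

theorem derivative_psExp {u : ℂ⟦X⟧} (hu : constantCoeff u = 0) :
    d⁄dX ℂ (psExp u) = psExp u * d⁄dX ℂ u := by
  rw [psExp, psComp_eq_subst hu, derivative_subst (HasSubst.of_constantCoeff_zero' hu),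
    derivative_exp]

theorem constantCoeff_psExp (u : ℂ⟦X⟧) : constantCoeff (psExp u) = 1 := by
  rw [← coeff_zero_eq_constantCoeff_apply]
  simp [psExp, psComp]

theorem derivative_logOneAdd : d⁄dX ℂ logOneAdd = mk fun n => (-1) ^ n := by
  ext n
  rw [coeff_derivative, logOneAdd, coeff_mk, coeff_mk, if_neg n.succ_ne_zero]
  push_cast
  field_simp
  ring

theorem derivative_logOneSub : d⁄dX ℂ logOneSub = -mk 1 := by
  ext n
  rw [coeff_derivative, logOneSub, coeff_mk, map_neg, coeff_mk, if_neg n.succ_ne_zero]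
  push_cast
  field_simp
  simp

theorem one_sub_X_sq_mul_derivative_smul_logOneAdd_sub_logOneSub (x : ℂ) :
    (1 - X ^ 2) * d⁄dX ℂ (x • (logOneAdd - logOneSub)) = C (2 * x) := by
  rw [Derivation.map_smul, map_sub, derivative_logOneAdd, derivative_logOneSub, smul_eq_C_mul,
    map_mul, map_ofNat]
  linear_combination C x * ((1 - X) * one_add_X_mul_mk_neg_one_pow (R := ℂ) +
    (1 + X) * mk_one_mul_one_sub_eq_one ℂ)

theorem genBinom_succ (x : ℂ) (k : ℕ) :
    ((k : ℂ) + 1) * genBinom x (k + 1) = (x - k) * genBinom x k := by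
  rw [genBinom, genBinom, Finset.prod_range_succ, Nat.factorial_succ]
  push_cast
  field_simp

-- `Pₙ(x) / n!`, with `C(n, k)` in place of `C(n, n - k)`.
noncomputable def pidduckCoeff (x : ℂ) (n : ℕ) : ℂ :=
  ∑ k ∈ Finset.range (n + 1), (n.choose k : ℂ) * (2 ^ k * genBinom x k)

theorem pidduckCoeff_eq_sum_range (x : ℂ) {m N : ℕ} (h : m < N) :
    pidduckCoeff x m = ∑ k ∈ Finset.range N, (m.choose k : ℂ) * (2 ^ k * genBinom x k) := by
  refine Finset.sum_subset (Finset.range_subset_range.2 h) fun k hk hk' => ?_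
  rw [Finset.mem_range] at hk hk'
  rw [Nat.choose_eq_zero_of_lt (by omega), Nat.cast_zero, zero_mul]

theorem pidduckCoeff_succ (x : ℂ) (n : ℕ) :
    ((n : ℂ) + 1) * pidduckCoeff x (n + 1) =
      (2 * x + 1) * pidduckCoeff x n + n * pidduckCoeff x (n - 1) := by
  set a : ℕ → ℂ := fun k => 2 ^ k * genBinom x k with ha
  have ha_succ (k : ℕ) : ((k : ℂ) + 1) * a (k + 1) = 2 * (x - k) * a k := by
    simp only [ha]
    linear_combination 2 ^ (k + 1) * genBinom_succ x k
  have hfirst : ∑ k ∈ Finset.range (n + 2), (k : ℂ) * n.choose (k - 1) * a k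
      = ∑ k ∈ Finset.range (n + 1), (n.choose k : ℂ) * (2 * (x - k) * a k) := by
    rw [Finset.sum_range_succ']
    simp only [Nat.cast_zero, zero_mul, add_zero, Nat.add_sub_cancel, Nat.cast_add_one]
    refine Finset.sum_congr rfl fun k _ => ?_
    rw [← ha_succ]
    ring
  have hsecond : ∑ k ∈ Finset.range (n + 2), (2 * k + 1 : ℂ) * n.choose k * a k
      = ∑ k ∈ Finset.range (n + 1), (2 * k + 1 : ℂ) * n.choose k * a k := by
    rw [Finset.sum_range_succ, Nat.choose_succ_self]
    simp
  have hthird : ∑ k ∈ Finset.range (n + 2), (n : ℂ) * (n - 1).choose k * a k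
      = n * pidduckCoeff x (n - 1) := by
    rw [pidduckCoeff_eq_sum_range x (show n - 1 < n + 2 by omega), Finset.mul_sum]
    simp only [mul_assoc, ha]
  calc ((n : ℂ) + 1) * pidduckCoeff x (n + 1)
      = ∑ k ∈ Finset.range (n + 2), ((n : ℂ) + 1) * (n + 1).choose k * a k := by
        rw [pidduckCoeff, Finset.mul_sum]
        simp only [mul_assoc, ha]
    _ = ∑ k ∈ Finset.range (n + 2), (k : ℂ) * n.choose (k - 1) * a k
        + ∑ k ∈ Finset.range (n + 2), (2 * k + 1 : ℂ) * n.choose k * a k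
        + ∑ k ∈ Finset.range (n + 2), (n : ℂ) * (n - 1).choose k * a k := by
        rw [← Finset.sum_add_distrib, ← Finset.sum_add_distrib]
        refine Finset.sum_congr rfl fun k _ => ?_
        rw [Nat.cast_add_one_mul_choose_eq]
        ring
    _ = (2 * x + 1) * pidduckCoeff x n + n * pidduckCoeff x (n - 1) := by
        rw [hfirst, hsecond, hthird]
        congr 1
        rw [pidduckCoeff, Finset.mul_sum, ← Finset.sum_add_distrib]
        refine Finset.sum_congr rfl fun k _ => ?_
        ring

theorem one_sub_X_sq_mul_derivative_mk_pidduckCoeff (x : ℂ) :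
    (1 - X ^ 2) * d⁄dX ℂ (mk (pidduckCoeff x)) = (C (2 * x + 1) + X) * mk (pidduckCoeff x) := by
  ext n
  have h := pidduckCoeff_succ x n
  simp only [sub_mul, one_mul, add_mul, map_sub, map_add, coeff_X_pow_mul', coeff_C_mul,
    coeff_derivative, coeff_mk]
  rcases n with _ | _ | n
  · norm_num at h ⊢
    linear_combination h
  · norm_num [coeff_succ_X_mul] at h ⊢
    linear_combination h
  · rw [if_pos (by omega), show n + 2 - 2 = n by omega, coeff_succ_X_mul, coeff_mk]
    push_cast at h ⊢
    linear_combination h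

theorem one_sub_X_sq_mul_derivative_of_one_sub_X_mul_eq_psExp {x : ℂ} {Q : ℂ⟦X⟧}
    (hQ : (1 - X) * Q = psExp (x • (logOneAdd - logOneSub))) :
    (1 - X ^ 2) * d⁄dX ℂ Q = (C (2 * x + 1) + X) * Q := by
  have hu : constantCoeff (x • (logOneAdd - logOneSub)) = 0 := by
    rw [← coeff_zero_eq_constantCoeff_apply]
    simp [logOneAdd, logOneSub]
  have hd := congrArg (d⁄dX ℂ) hQ
  rw [Derivation.leibniz, derivative_psExp hu, ← hQ, map_sub, derivative_X,
    Derivation.map_one_eq_zero, smul_eq_mul, smul_eq_mul] at hd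
  rw [map_add, map_one]
  linear_combination
    (1 + X) * hd + Q * one_sub_X_sq_mul_derivative_smul_logOneAdd_sub_logOneSub x

/-- Pidduck polynomials, defined by `∑ Pₙ(x) zⁿ/n! = (1/(1-z)) ((1+z)/(1-z))^x`,
satisfy `Pₙ(x) = n! ∑_{k=0}^n C(n, n-k) 2^k C(x,k)`. -/
theorem pidduck_expansion (x : ℂ) (P : ℕ → ℂ)
    (hP : (1 - PowerSeries.X) * (PowerSeries.mk fun n => P n / (n.factorial : ℂ)) =
      psExp (x • (logOneAdd - logOneSub)))
    (n : ℕ) :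
    P n = (n.factorial : ℂ) *
      ∑ k ∈ Finset.range (n + 1),
        (n.choose (n - k) : ℂ) * 2 ^ k * genBinom x k := by
  have h0 : constantCoeff (mk fun n => P n / (n.factorial : ℂ)) =
      constantCoeff (mk (pidduckCoeff x)) := by
    have h := congrArg constantCoeff hP
    rw [map_mul, constantCoeff_psExp] at h
    simpa [pidduckCoeff, genBinom] using h
  have hQT := eq_of_mul_derivative_eq_mul_self (by simp)
    (one_sub_X_sq_mul_derivative_of_one_sub_X_mul_eq_psExp hP)
    (one_sub_X_sq_mul_derivative_mk_pidduckCoeff x) h0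
  have hn := congrArg (coeff n) hQT
  rw [coeff_mk, coeff_mk, div_eq_iff (Nat.cast_ne_zero.2 n.factorial_ne_zero)] at hn
  rw [hn, mul_comm, pidduckCoeff]
  congr 1
  refine Finset.sum_congr rfl fun k hk => ?_
  rw [Nat.choose_symm (Finset.mem_range_succ_iff.1 hk), mul_assoc]
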